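/- Let f(θ, m) be dynamics ε-bisimilarly abstracted with grid size η such that (1 - L_m)·ε ≥ η/2 + δ̄_m for all modes m, where L_m < 1 is the contraction constant of f(·, m). Then any perturbed dynamics f' with ‖f'(θ, m) - f(θ, m)‖∞ ≤ δ̄_m for all θ and m preserves the ε-closeness relation: if ‖θ - ξ‖∞ ≤ ε and ξ' is the grid point with ‖f(ξ, m) - ξ'‖∞ ≤ η/2, then ‖f'(θ, m) - ξ'‖∞ ≤ ε. -/
import Mathlib


/-- mildly perturbed dynamics preserve the ε-closeness relation with the
same grid abstraction. -/
theorem stmt_11 (d M : ℕ)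
    (f f' : (Fin d → ℝ) → Fin M → (Fin d → ℝ))
    (L δbar : Fin M → ℝ) (ε η : ℝ)
    (hε : 0 < ε) (hη : 0 < η)
    (hL : ∀ m, 0 ≤ L m ∧ L m < 1)
    (hcontr : ∀ (m : Fin M) (θ₁ θ₂ : Fin d → ℝ), ‖f θ₁ m - f θ₂ m‖ ≤ L m * ‖θ₁ - θ₂‖)
    (hgap : ∀ m, (1 - L m) * ε ≥ η / 2 + δbar m)
    (hpert : ∀ (θ : Fin d → ℝ) (m : Fin M), ‖f' θ m - f θ m‖ ≤ δbar m)
    (m : Fin M) (θ ξ ξ' : Fin d → ℝ)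
    (hclose : ‖θ - ξ‖ ≤ ε) (hgrid : ‖f ξ m - ξ'‖ ≤ η / 2) :
    ‖f' θ m - ξ'‖ ≤ ε := by
  have h1 : ‖f' θ m - ξ'‖ ≤ ‖f' θ m - f θ m‖ + ‖f θ m - f ξ m‖ + ‖f ξ m - ξ'‖ := by
    have := norm_sub_le_norm_sub_add_norm_sub (f' θ m) (f θ m) ξ'
    have := norm_sub_le_norm_sub_add_norm_sub (f θ m) (f ξ m) ξ'
    linarith
  have h2 := hpert θ m
  have h3 := hcontr m θ ξ
  have h4 : L m * ‖θ - ξ‖ ≤ L m * ε := by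
    exact mul_le_mul_of_nonneg_left hclose (hL m).1
  have h5 := hgap m
  linarith
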